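/- (Averaged Rademacher bound via square-root concavity) If the empirical Rademacher complexity satisfies R(M,S) ≤ (1/(2N)) Tr√(∑ₙ ρ(xₙ)²) with the xₙ drawn i.i.d. from a distribution p(x), then the expected Rademacher complexity satisfies E_S R(M,S) ≤ (1/(2√N)) Tr√(∫ p(x) ρ(x)² dx). -/

import Mathlib

open Matrix MeasureTheory
open scoped ComplexOrder

/-- The positive semidefinite square root of a positive semidefinite matrix, as defined in
Mathlib (Dec 2024) under the name `Matrix.PosSemidef.sqrt` (since removed). -/
noncomputable def Matrix.PosSemidef.sqrt {n : Type*} [Fintype n] [DecidableEq n]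
    {A : Matrix n n ℂ} (hA : A.PosSemidef) : Matrix n n ℂ :=
  hA.1.eigenvectorUnitary.1 * diagonal ((↑) ∘ (√·) ∘ hA.1.eigenvalues) *
  (star hA.1.eigenvectorUnitary : Matrix n n ℂ)

lemma Matrix.PosSemidef.posSemidef_sqrt {n : Type*} [Fintype n] [DecidableEq n]
    {A : Matrix n n ℂ} (hA : A.PosSemidef) : PosSemidef hA.sqrt := by
  unfold Matrix.PosSemidef.sqrt
  have h := (posSemidef_diagonal_iff (d := ((↑) ∘ (√·) ∘ hA.1.eigenvalues : n → ℂ))).mpr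
    (fun i => by
      simp only [Function.comp_apply]
      exact_mod_cast Real.sqrt_nonneg _)
  exact h.mul_mul_conjTranspose_same (hA.1.eigenvectorUnitary : Matrix n n ℂ)

/-- Positive semidefinite square root (for PSD inputs): `(AᴴA)^{1/4}`, which equals
`√A` whenever `A` is positive semidefinite. -/
noncomputable def msqrt {n : Type*} [Fintype n] [DecidableEq n]
    (A : Matrix n n ℂ) : Matrix n n ℂ :=
  (Matrix.PosSemidef.posSemidef_sqrt (Matrix.posSemidef_conjTranspose_mul_self A)).sqrt

/-!
For invertible `Z ≥ 0` and Hermitian `A`, expanding `Tr((A - Z) Z⁻¹ (A - Z)) ≥ 0` gives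
`2 Tr A ≤ Tr Z + Tr(A² Z⁻¹)`; with `A = √Y` this is `2 Tr √Y ≤ Tr Z + Tr(Y Z⁻¹)`, with equality
at `Z = √Y`. So `Tr √·` is an infimum of affine functions of `Y`, hence concave: taking
expectations with `Z = √(E Y + ε)` fixed gives `E Tr √Y ≤ Tr √(E Y) + d √ε` in dimension `d`. For
`Y = ∑ₙ ρ(xₙ)²` with i.i.d. `xₙ` one has `E Y = N ∫ ρ²`, and `Tr √(N M) = √N Tr √M`.
-/

open scoped MatrixOrder Topology

namespace Matrix

theorem PosSemidef.sqrt_eq_cfc {n : Type*} [Fintype n] [DecidableEq n]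
    {A : Matrix n n ℂ} (hA : A.PosSemidef) : hA.sqrt = CFC.sqrt A := by
  rw [CFC.sqrt_eq_cfc, cfc_nnreal_eq_real _ A, hA.1.cfc_eq, IsHermitian.cfc,
    Unitary.conjStarAlgAut_apply, PosSemidef.sqrt]
  congr 3
  funext i
  simp [Real.coe_toNNReal', max_eq_left (hA.eigenvalues_nonneg i)]

theorem PosSemidef.normSq_apply_le {n : Type*} {A : Matrix n n ℂ} (hA : A.PosSemidef) (i j : n) :
    Complex.normSq (A i j) ≤ (A i i).re * (A j j).re := by
  classical
  have hdet := (hA.submatrix ![i, j]).det_nonneg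
  have hji : A j i = star (A i j) := (hA.isHermitian.apply j i).symm
  have hii := Complex.nonneg_iff.mp (hA.diag_nonneg (i := i))
  have hjj := Complex.nonneg_iff.mp (hA.diag_nonneg (i := j))
  rw [det_fin_two] at hdet
  simp only [submatrix_apply, Matrix.cons_val_zero, Matrix.cons_val_one, hji] at hdet
  simpa [Complex.mul_re, ← hii.2, ← hjj.2, Complex.normSq_apply] using
    (Complex.nonneg_iff.mp hdet).1

section Entries
variable {n : Type*} [Fintype n]

theorem PosSemidef.norm_apply_le_re_trace {A : Matrix n n ℂ} (hA : A.PosSemidef) (i j : n) :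
    ‖A i j‖ ≤ A.trace.re := by
  have hdiag : ∀ k, 0 ≤ (A k k).re := fun k => (Complex.nonneg_iff.mp hA.diag_nonneg).1
  have hle : ∀ k, (A k k).re ≤ A.trace.re := fun k => by
    rw [trace, Complex.re_sum]
    exact Finset.single_le_sum (f := fun k => (A k k).re) (fun k _ => hdiag k) (Finset.mem_univ k)
  have h := hA.normSq_apply_le i j
  rw [Complex.normSq_eq_norm_sq] at h
  nlinarith [hdiag i, hdiag j, hle i, hle j, norm_nonneg (A i j)]

theorem PosSemidef.norm_mul_self_apply_le {A : Matrix n n ℂ} (hA : A.PosSemidef) (i j : n) :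
    ‖(A * A) i j‖ ≤ Fintype.card n * A.trace.re ^ 2 := by
  have hle := hA.norm_apply_le_re_trace
  calc ‖(A * A) i j‖ ≤ ∑ k, ‖A i k‖ * ‖A k j‖ := by
        simpa [mul_apply] using norm_sum_le Finset.univ fun k => A i k * A k j
    _ ≤ ∑ _k : n, A.trace.re ^ 2 := Finset.sum_le_sum fun k _ => by
      rw [sq]
      exact mul_le_mul (hle i k) (hle k j) (norm_nonneg _) ((norm_nonneg _).trans (hle i k))
    _ = Fintype.card n * A.trace.re ^ 2 := by simp

theorem dotProduct_mulVec_eq_trace_mul_vecMulVec (M : Matrix n n ℂ) (v : n → ℂ) :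
    star v ⬝ᵥ M *ᵥ v = (M * vecMulVec v (star v)).trace := by
  rw [mul_vecMulVec, trace_vecMulVec, dotProduct_comm]

theorem re_trace_le_re_trace {A B : Matrix n n ℂ} (h : A ≤ B) : A.trace.re ≤ B.trace.re :=
  Complex.re_le_re (OrderHomClass.mono (tracePositiveLinearMap n ℂ ℂ) h)

end Entries

section Integral
variable {n Ω : Type*} [Fintype n] [MeasurableSpace Ω] {ν : Measure Ω} {Y : Ω → Matrix n n ℂ}

theorem integrable_trace_mul (hY : ∀ i j, Integrable (fun ω => Y ω i j) ν) (C : Matrix n n ℂ) :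
    Integrable (fun ω => (Y ω * C).trace) ν := by
  simp only [trace, diag, mul_apply]
  exact integrable_finsetSum _ fun i _ => integrable_finsetSum _ fun j _ => (hY i j).mul_const _

theorem integral_trace_mul (hY : ∀ i j, Integrable (fun ω => Y ω i j) ν) (C : Matrix n n ℂ) :
    ∫ ω, (Y ω * C).trace ∂ν = ((of fun i j => ∫ ω, Y ω i j ∂ν) * C).trace := by
  simp only [trace, diag, mul_apply, of_apply]
  rw [integral_finsetSum _ fun i _ => integrable_finsetSum _ fun j _ => (hY i j).mul_const _]
  refine Finset.sum_congr rfl fun i _ => ?_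
  rw [integral_finsetSum _ fun j _ => (hY i j).mul_const _]
  simp only [integral_mul_const]

theorem posSemidef_integral (hY : ∀ ω, (Y ω).PosSemidef)
    (hint : ∀ i j, Integrable (fun ω => Y ω i j) ν) :
    (of fun i j => ∫ ω, Y ω i j ∂ν).PosSemidef := by
  refine .of_dotProduct_mulVec_nonneg ?_ fun v => ?_
  · ext i j
    simp only [conjTranspose_apply, of_apply, RCLike.star_def, ← integral_conj]
    congr 1 with ω
    exact (hY ω).isHermitian.apply i j
  · rw [dotProduct_mulVec_eq_trace_mul_vecMulVec, ← integral_trace_mul hint]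
    exact integral_nonneg fun ω =>
      dotProduct_mulVec_eq_trace_mul_vecMulVec (Y ω) v ▸ (hY ω).dotProduct_mulVec_nonneg v

end Integral

section Sqrt
variable {n : Type*} [Fintype n] [DecidableEq n]

theorem sqrt_smul {c : ℝ} (hc : 0 ≤ c) {A : Matrix n n ℂ} (hA : A.PosSemidef) :
    CFC.sqrt (c • A) = √c • CFC.sqrt A := by
  refine CFC.sqrt_unique ?_ (smul_nonneg (Real.sqrt_nonneg c) (CFC.sqrt_nonneg A))
  rw [smul_mul_smul_comm, Real.mul_self_sqrt hc, CFC.sqrt_mul_sqrt_self A hA.nonneg]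

theorem two_mul_trace_le_trace_add_trace_mul_inv {A Z : Matrix n n ℂ} (hA : A.IsHermitian)
    (hZ : Z.PosSemidef) (hZu : IsUnit Z) :
    2 * A.trace ≤ Z.trace + (A * A * Z⁻¹).trace := by
  have hZd : IsUnit Z.det := (isUnit_iff_isUnit_det Z).mp hZu
  have hsq : 0 ≤ ((A - Z) * Z⁻¹ * (A - Z)ᴴ).trace :=
    (hZ.inv.mul_mul_conjTranspose_same (A - Z)).trace_nonneg
  have hexp : ((A - Z) * Z⁻¹ * (A - Z)ᴴ).trace =
      Z.trace + (A * A * Z⁻¹).trace - 2 * A.trace := by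
    rw [conjTranspose_sub, hA.eq, hZ.isHermitian.eq]
    simp only [sub_mul, mul_sub, Matrix.mul_assoc, mul_nonsing_inv _ hZd, nonsing_inv_mul _ hZd,
      Matrix.mul_one, Matrix.one_mul, trace_sub]
    rw [trace_mul_comm A (Z⁻¹ * A), Matrix.mul_assoc, trace_mul_comm Z⁻¹, Matrix.mul_assoc]
    ring
  rwa [hexp, sub_nonneg] at hsq

theorem two_mul_re_trace_sqrt_le {Y Z : Matrix n n ℂ} (hY : Y.PosSemidef) (hZ : Z.PosSemidef)
    (hZu : IsUnit Z) : 2 * (CFC.sqrt Y).trace.re ≤ Z.trace.re + (Y * Z⁻¹).trace.re := by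
  have h := Complex.re_le_re <|
    two_mul_trace_le_trace_add_trace_mul_inv (CFC.sqrt_nonneg Y).posSemidef.isHermitian hZ hZu
  rw [CFC.sqrt_mul_sqrt_self Y hY.nonneg, Complex.add_re] at h
  simpa [Complex.mul_re] using h

theorem re_trace_algebraMap (c : ℝ) :
    (algebraMap ℝ (Matrix n n ℂ) c).trace.re = Fintype.card n * c := by
  simp [Algebra.algebraMap_eq_smul_one, mul_comm]

/-- The witness is `Z = √(E + ε)`, for which `E Z⁻¹ = Z - ε Z⁻¹`; the shift by `ε` makes `Z`
invertible when `E` is singular. -/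
theorem exists_trace_add_trace_mul_inv_le {E : Matrix n n ℂ} (hE : E.PosSemidef) {ε : ℝ}
    (hε : 0 < ε) :
    ∃ Z : Matrix n n ℂ, Z.PosSemidef ∧ IsUnit Z ∧
      Z.trace.re + (E * Z⁻¹).trace.re ≤ 2 * ((CFC.sqrt E).trace.re + Fintype.card n * √ε) := by
  have hspec : ∀ x ∈ spectrum ℝ E, 0 ≤ x := spectrum_nonneg_of_nonneg hE.nonneg
  set Z := cfc (fun x => √(x + ε)) E with hZdef
  have hZ : Z.PosSemidef := (cfc_nonneg fun x _ => Real.sqrt_nonneg _).posSemidef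
  have hZu : IsUnit Z := (isUnit_cfc_iff _ E).mpr fun x hx =>
    (Real.sqrt_pos.mpr (by linarith [hspec x hx])).ne'
  have hZZ : Z * Z = E + algebraMap ℝ _ ε := by
    calc Z * Z = cfc (fun x => x + ε) E := by
          rw [hZdef, ← cfc_mul ..]
          exact cfc_congr fun x hx => Real.mul_self_sqrt (by linarith [hspec x hx])
      _ = E + algebraMap ℝ _ ε := by rw [cfc_add_const .., cfc_id' ℝ E]
  have hZle : Z ≤ CFC.sqrt E + algebraMap ℝ _ √ε := by
    rw [CFC.sqrt_eq_real_sqrt E hE.nonneg, cfcₙ_eq_cfc, ← cfc_add_const ..]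
    refine cfc_mono fun x hx => ?_
    have hx0 := hspec x hx
    refine Real.sqrt_le_iff.mpr ⟨by positivity, ?_⟩
    nlinarith [Real.sq_sqrt hx0, Real.sq_sqrt hε.le, Real.sqrt_nonneg x, Real.sqrt_nonneg ε]
  have hEZ : E * Z⁻¹ = Z - ε • Z⁻¹ := by
    rw [← add_sub_cancel_right E (algebraMap ℝ _ ε), ← hZZ, sub_mul, Matrix.mul_assoc,
      mul_nonsing_inv _ ((isUnit_iff_isUnit_det Z).mp hZu), Matrix.mul_one,
      Algebra.algebraMap_eq_smul_one, smul_mul, Matrix.one_mul]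
  have hZinv : 0 ≤ (Z⁻¹).trace.re := (Complex.nonneg_iff.mp hZ.inv.trace_nonneg).1
  refine ⟨Z, hZ, hZu, ?_⟩
  have := re_trace_le_re_trace hZle
  rw [trace_add, Complex.add_re, re_trace_algebraMap] at this
  rw [hEZ, trace_sub, trace_smul, Complex.sub_re, Complex.real_smul, Complex.re_ofReal_mul]
  nlinarith

/-- Stated for an integrable minorant `f` of `ω ↦ Tr √(Y ω)`, which spares proving that this
function is measurable. -/
theorem integral_le_re_trace_sqrt {Ω : Type*} [MeasurableSpace Ω] {ν : Measure Ω}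
    [IsProbabilityMeasure ν] {Y : Ω → Matrix n n ℂ} (hY : ∀ ω, (Y ω).PosSemidef)
    (hint : ∀ i j, Integrable (fun ω => Y ω i j) ν) {f : Ω → ℝ} (hf : Integrable f ν)
    (hfY : ∀ ω, f ω ≤ (CFC.sqrt (Y ω)).trace.re) :
    ∫ ω, f ω ∂ν ≤ (CFC.sqrt (of fun i j => ∫ ω, Y ω i j ∂ν)).trace.re := by
  set E := of fun i j => ∫ ω, Y ω i j ∂ν
  have happrox : ∀ ε > 0, ∫ ω, f ω ∂ν ≤ (CFC.sqrt E).trace.re + Fintype.card n * √ε := by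
    intro ε hε
    obtain ⟨Z, hZ, hZu, hZbound⟩ :=
      exists_trace_add_trace_mul_inv_le (posSemidef_integral hY hint) hε
    have hbound : ∀ ω, f ω ≤ (Z.trace.re + (Y ω * Z⁻¹).trace.re) / 2 := fun ω => by
      linarith [hfY ω, two_mul_re_trace_sqrt_le (hY ω) hZ hZu]
    have hint' : Integrable (fun ω => (Y ω * Z⁻¹).trace.re) ν := (integrable_trace_mul hint Z⁻¹).re
    have hre := integral_re (integrable_trace_mul hint Z⁻¹)
    simp only [RCLike.re_to_complex] at hre
    calc ∫ ω, f ω ∂ν ≤ ∫ ω, (Z.trace.re + (Y ω * Z⁻¹).trace.re) / 2 ∂ν :=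
          integral_mono hf (((integrable_const _).add hint').div_const 2) hbound
      _ = (Z.trace.re + (E * Z⁻¹).trace.re) / 2 := by
          rw [integral_div, integral_add (integrable_const _) hint', integral_const, hre,
            integral_trace_mul hint]
          simp [E]
      _ ≤ _ := by linarith
  have hlim : Filter.Tendsto (fun ε => (CFC.sqrt E).trace.re + Fintype.card n * √ε) (𝓝[>] 0)
      (𝓝 ((CFC.sqrt E).trace.re)) := by
    have : Continuous (fun ε => (CFC.sqrt E).trace.re + Fintype.card n * √ε) := by fun_prop
    simpa using (this.tendsto 0).mono_left nhdsWithin_le_nhds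
  exact ge_of_tendsto hlim (eventually_nhdsWithin_of_forall happrox)

end Sqrt

section Sampling
variable {n X ι : Type*} [MeasurableSpace X] {μ : Measure X} [Fintype ι]

theorem integrable_mul_self_apply_of_trace_eq_one [Fintype n] [IsFiniteMeasure μ]
    {ρ : X → Matrix n n ℂ} (hmeas : ∀ i j, Measurable fun x => ρ x i j) (hρ : ∀ x, (ρ x).PosSemidef)
    (htr : ∀ x, (ρ x).trace = 1) (i j : n) :
    Integrable (fun x => (ρ x * ρ x) i j) μ := by
  refine .of_bound ?_ (Fintype.card n) (.of_forall fun x => ?_)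
  · simp only [mul_apply]
    exact (Finset.measurable_sum _ fun k _ => (hmeas i k).mul (hmeas k j)).aestronglyMeasurable
  · simpa [htr x] using (hρ x).norm_mul_self_apply_le i j

variable {F : X → Matrix n n ℂ}

theorem integrable_sum_comp_eval_apply [IsFiniteMeasure μ]
    (hF : ∀ i j, Integrable (fun x => F x i j) μ) (i j : n) :
    Integrable (fun xs : ι → X => (∑ k, F (xs k)) i j) (Measure.pi fun _ => μ) := by
  simp only [Matrix.sum_apply]
  exact integrable_finsetSum _ fun k _ =>
    integrable_comp_eval (X := fun _ => X) (μ := fun _ => μ) (i := k) (hF i j)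

theorem integral_sum_comp_eval_apply [IsProbabilityMeasure μ]
    (hF : ∀ i j, Integrable (fun x => F x i j) μ) :
    (of fun i j => ∫ xs : ι → X, (∑ k, F (xs k)) i j ∂(Measure.pi fun _ => μ)) =
      (Fintype.card ι : ℝ) • of fun i j => ∫ x, F x i j ∂μ := by
  ext i j
  simp only [of_apply, Matrix.sum_apply]
  rw [integral_finsetSum _ fun k _ =>
    integrable_comp_eval (X := fun _ => X) (μ := fun _ => μ) (i := k) (hF i j)]
  simp [integral_comp_eval (X := fun _ => X) (μ := fun _ => μ) (hF i j).aestronglyMeasurable]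

end Sampling

end Matrix

theorem msqrt_eq_cfcSqrt {n : Type*} [Fintype n] [DecidableEq n] {A : Matrix n n ℂ}
    (hA : A.PosSemidef) : msqrt A = CFC.sqrt A := by
  rw [msqrt, PosSemidef.sqrt_eq_cfc, PosSemidef.sqrt_eq_cfc, hA.isHermitian.eq,
    CFC.sqrt_mul_self A hA.nonneg]

/-- Averaged Rademacher bound via operator concavity of the square root: if the
empirical Rademacher complexity satisfies `R(S) ≤ (1/(2N)) Tr √(∑ₙ ρ(xₙ)²)` for every
sample `S = (x₁,…,x_N)`, and the `xₙ` are drawn i.i.d. from a probability measure `μ`,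
then `E_S R(S) ≤ (1/(2√N)) Tr √(∫ ρ(x)² dμ(x))`. -/
theorem averaged_rademacher_bound {X : Type*} [MeasurableSpace X]
    {d N : ℕ} (hN : 0 < N)
    (μ : Measure X) [IsProbabilityMeasure μ]
    (ρ : X → Matrix (Fin d) (Fin d) ℂ)
    (hmeas : ∀ i j, Measurable fun x => ρ x i j)
    (hρ : ∀ x, (ρ x).PosSemidef) (htr : ∀ x, (ρ x).trace = 1)
    (R : (Fin N → X) → ℝ)
    (hRint : Integrable R (Measure.pi fun _ : Fin N => μ))
    (hR : ∀ xs : Fin N → X,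
      R xs ≤ (1 / (2 * N) : ℝ) * ((msqrt (∑ n, ρ (xs n) * ρ (xs n))).trace).re) :
    (∫ xs, R xs ∂(Measure.pi fun _ : Fin N => μ))
      ≤ (1 / (2 * Real.sqrt N)) *
          ((msqrt (Matrix.of fun i j => ∫ x, (ρ x * ρ x) i j ∂μ)).trace).re := by
  have hρ2 : ∀ x, (ρ x * ρ x).PosSemidef := fun x => by simpa [sq] using (hρ x).pow 2
  have hint := integrable_mul_self_apply_of_trace_eq_one (μ := μ) hmeas hρ htr
  have hM := posSemidef_integral hρ2 hint
  have hY : ∀ xs : Fin N → X, (∑ n, ρ (xs n) * ρ (xs n)).PosSemidef := fun xs =>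
    posSemidef_sum _ fun n _ => hρ2 (xs n)
  have h2N : (0 : ℝ) < 2 * N := by positivity
  have hjensen := integral_le_re_trace_sqrt hY (integrable_sum_comp_eval_apply hint)
    (hRint.const_mul (2 * N)) fun xs => by
      have := mul_le_mul_of_nonneg_left (hR xs) h2N.le
      rwa [← mul_assoc, mul_one_div_cancel h2N.ne', one_mul, msqrt_eq_cfcSqrt (hY xs)] at this
  rw [integral_sum_comp_eval_apply hint, Fintype.card_fin, sqrt_smul (Nat.cast_nonneg N) hM,
    trace_smul, Complex.real_smul, Complex.re_ofReal_mul, integral_const_mul] at hjensen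
  rw [msqrt_eq_cfcSqrt hM, div_mul_eq_mul_div, one_mul, le_div_iff₀ (by positivity)]
  refine le_of_mul_le_mul_left ?_ (by positivity : 0 < √(N : ℝ))
  linear_combination hjensen + 2 * (∫ xs, R xs ∂Measure.pi fun _ => μ) *
    Real.mul_self_sqrt (Nat.cast_nonneg (α := ℝ) N)
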